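/- arXiv:2605.07996 — 3 statements merged into one kernel-verified Lean document; each statement's English description precedes it below -/
import Mathlib

section
/- Let K voters each have a unit-normalized nonnegative score vector v_k over m candidates, and positive scales s_k. Define scaled welfare SW^s(x) = (1/K) sum_k s_k (v_k · x) and unscaled welfare SW(x) = (1/K) sum_k (v_k · x), noting 0 ≤ SW(x) ≤ 1 for any lottery x. Let x_cs maximize SW^s, x_c maximize SW, and x_ν be any lottery with SW(x_c) − SW(x_ν) ≤ d⁺ for some d⁺ ≥ 0. Then SW^s(x_cs) − SW^s(x_ν) ≤ (max_k s_k − min_k s_k) + (min_k s_k) · d⁺. -/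
/-!
Write `u_k(x) = ∑ᵢ v k i * x i ∈ [0, 1]` and let `M`, `L` be the largest and smallest scale.
Rescaling every voter by a factor in `[L, M]` gives `SWs x ≤ M * SW x` and `L * SW x ≤ SWs x`,
so `SWs xcs - SWs xν ≤ M * SW xc - L * (SW xc - dplus) = (M - L) * SW xc + L * dplus`,
and `SW xc ≤ 1` finishes the bound.
-/

open Finset

/-- `x` is a lottery (probability vector) over `m` candidates. -/
def IsLottery {m : ℕ} (x : Fin m → ℝ) : Prop :=
  (∀ i, 0 ≤ x i) ∧ ∑ i, x i = 1

namespace IsLottery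

variable {m : ℕ} {x w : Fin m → ℝ}

lemma le_one (hx : IsLottery x) (i : Fin m) : x i ≤ 1 :=
  hx.2 ▸ single_le_sum (fun j _ => hx.1 j) (mem_univ i)

lemma sum_mul_nonneg (hx : IsLottery x) (hw : ∀ i, 0 ≤ w i) : 0 ≤ ∑ i, w i * x i :=
  sum_nonneg fun i _ => mul_nonneg (hw i) (hx.1 i)

lemma sum_mul_le_one (hx : IsLottery x) (hw0 : ∀ i, 0 ≤ w i) (hw1 : ∑ i, w i = 1) :
    ∑ i, w i * x i ≤ 1 :=
  calc ∑ i, w i * x i ≤ ∑ i, w i :=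
        sum_le_sum fun i _ => mul_le_of_le_one_right (hw0 i) (hx.le_one i)
    _ = 1 := hw1

end IsLottery

section Rescaling

variable {ι : Type*} {t : Finset ι} (ht : t.Nonempty) {a u : ι → ℝ}

lemma sum_mul_le_sup'_mul_sum (hu : ∀ i ∈ t, 0 ≤ u i) :
    ∑ i ∈ t, a i * u i ≤ t.sup' ht a * ∑ i ∈ t, u i := by
  rw [mul_sum]
  exact sum_le_sum fun i hi => mul_le_mul_of_nonneg_right (le_sup' a hi) (hu i hi)

lemma inf'_mul_sum_le_sum_mul (hu : ∀ i ∈ t, 0 ≤ u i) :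
    t.inf' ht a * ∑ i ∈ t, u i ≤ ∑ i ∈ t, a i * u i := by
  rw [mul_sum]
  exact sum_le_sum fun i hi => mul_le_mul_of_nonneg_right (inf'_le a hi) (hu i hi)

end Rescaling

lemma one_div_mul_sum_le_one {n : ℕ} {f : Fin n → ℝ} (hf : ∀ k, f k ≤ 1) :
    1 / (n : ℝ) * ∑ k, f k ≤ 1 := by
  have hsum : ∑ k, f k ≤ n := by simpa using sum_le_card_nsmul univ f 1 fun k _ => hf k
  rcases n.eq_zero_or_pos with rfl | hn
  · simp
  · rw [one_div_mul_eq_div, div_le_one (by positivity)]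
    exact hsum

theorem scaled_distortion_add_general
    (K m : ℕ)
    (v : Fin K → Fin m → ℝ)
    (hv0 : ∀ k i, 0 ≤ v k i) (hv1 : ∀ k, ∑ i, v k i = 1)
    (s : Fin K → ℝ) (hs : ∀ k, 0 < s k)
    (SWs SW : (Fin m → ℝ) → ℝ)
    (hSWs : ∀ x, SWs x = (1 / (K : ℝ)) * ∑ k, s k * ∑ i, v k i * x i)
    (hSW : ∀ x, SW x = (1 / (K : ℝ)) * ∑ k, ∑ i, v k i * x i)
    (xcs xc xν : Fin m → ℝ)
    (hxcs : IsLottery xcs) (hxc : IsLottery xc) (hxν : IsLottery xν)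
    (hxc_opt : ∀ x, IsLottery x → SW x ≤ SW xc)
    (dplus : ℝ)
    (hdist : SW xc - SW xν ≤ dplus)
    (hne : (Finset.univ : Finset (Fin K)).Nonempty) :
    SWs xcs - SWs xν ≤
      (Finset.univ.sup' hne s - Finset.univ.inf' hne s)
        + (Finset.univ.inf' hne s) * dplus := by
  set M := univ.sup' hne s
  set L := univ.inf' hne s
  have hL : 0 ≤ L := le_inf' hne s fun k _ => (hs k).le
  have hLM : L ≤ M :=
    let ⟨k, hk⟩ := hne
    (inf'_le s hk).trans (le_sup' s hk)
  have hu : ∀ x, IsLottery x → ∀ k ∈ univ, 0 ≤ ∑ i, v k i * x i :=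
    fun x hx k _ => hx.sum_mul_nonneg (hv0 k)
  have hSWs_le : SWs xcs ≤ M * SW xcs := by
    rw [hSWs, hSW, mul_left_comm]
    gcongr
    exact sum_mul_le_sup'_mul_sum hne (hu xcs hxcs)
  have hSWs_ge : L * SW xν ≤ SWs xν := by
    rw [hSWs, hSW, mul_left_comm]
    gcongr
    exact inf'_mul_sum_le_sum_mul hne (hu xν hxν)
  have hSW_le_one : SW xc ≤ 1 :=
    hSW xc ▸ one_div_mul_sum_le_one fun k => hxc.sum_mul_le_one (hv0 k) (hv1 k)
  have hSW_opt : SW xcs ≤ SW xc := hxc_opt xcs hxcs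
  calc SWs xcs - SWs xν ≤ M * SW xc - L * (SW xc - dplus) := by
        gcongr ?_ - ?_
        · exact hSWs_le.trans (by gcongr; exact hL.trans hLM)
        · exact (mul_le_mul_of_nonneg_left (by linarith) hL).trans hSWs_ge
    _ = (M - L) * SW xc + L * dplus := by ring
    _ ≤ (M - L) + L * dplus := by
        gcongr
        exact mul_le_of_le_one_right (sub_nonneg.2 hLM) hSW_le_one

/-- Additive scaled-distortion bound (Theorem on additive scaled distortion). -/
theorem scaled_distortion_add
    (K m : ℕ) (hK : 0 < K)
    (v : Fin K → Fin m → ℝ)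
    (hv0 : ∀ k i, 0 ≤ v k i) (hv1 : ∀ k, ∑ i, v k i = 1)
    (s : Fin K → ℝ) (hs : ∀ k, 0 < s k)
    (SWs SW : (Fin m → ℝ) → ℝ)
    (hSWs : ∀ x, SWs x = (1 / (K : ℝ)) * ∑ k, s k * ∑ i, v k i * x i)
    (hSW : ∀ x, SW x = (1 / (K : ℝ)) * ∑ k, ∑ i, v k i * x i)
    (xcs xc xν : Fin m → ℝ)
    (hxcs : IsLottery xcs) (hxc : IsLottery xc) (hxν : IsLottery xν)
    (hxcs_opt : ∀ x, IsLottery x → SWs x ≤ SWs xcs)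
    (hxc_opt : ∀ x, IsLottery x → SW x ≤ SW xc)
    (dplus : ℝ) (hd0 : 0 ≤ dplus)
    (hdist : SW xc - SW xν ≤ dplus)
    (hne : (Finset.univ : Finset (Fin K)).Nonempty) :
    SWs xcs - SWs xν ≤
      (Finset.univ.sup' hne s - Finset.univ.inf' hne s)
        + (Finset.univ.inf' hne s) * dplus :=
  scaled_distortion_add_general K m v hv0 hv1 s hs SWs SW hSWs hSW xcs xc xν hxcs hxc hxν hxc_opt
    dplus hdist hne
end

section
/- Consider a two-player game where player 1's strategies are probability vectors over finite action set A_1 and player 2's over A_2, with bilinear utility u_1 taking values in [0,1]. Fix sequences of strategies x¹_1,…,x¹_T for player 1 and x²_1,…,x²_T for player 2 such that for every t' with 2 ≤ t' ≤ T, the strategy x¹_{t'} is a δ-approximate best response to the average x̄²_{t'−1} = (1/(t'−1)) sum_{t=1}^{t'−1} x²_t, i.e. u_1(x¹_{t'}, x̄²_{t'−1}) ≥ u_1(z, x̄²_{t'−1}) − δ for all strategies z. Let x̄¹_T and x̄²_T be the time averages over T rounds. Then for every strategy z, u_1(z, x̄²_T) − u_1(x̄¹_T, x̄²_T) ≤ (T+1)/(2T)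 + ((T−1)/(2T)) · δ. -/
open Finset

/-!
Multiplied by `T²`, the claim bounds `T · ∑ₜ u(z, x²ₜ) - ∑_{t'} ∑ₜ u(x¹_{t'}, x²ₜ)`.
The best-response condition at round `t'`, scaled by `t' - 1`, says that `x¹_{t'}` earns
against `x²₁, …, x²_{t'-1}` at least what `z` earns there, minus `(t' - 1) δ`; since `u ≥ 0`,
its payoff against the later rounds only helps. Summing over `t'`, the payoff of `z` left
uncovered is `∑ₜ t · u(z, x²ₜ) ≤ T (T + 1) / 2` because `u ≤ 1`, and the errors add up to
`δ · T (T - 1) / 2`.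
-/

theorem sum_Icc_natCast (T : ℕ) : ∑ t ∈ Icc 1 T, (t : ℝ) = T * (T + 1) / 2 := by
  induction T with
  | zero => simp
  | succ n ih =>
    rw [sum_Icc_succ_top (by omega), ih]
    push_cast
    ring

theorem sum_Icc_natCast_sub_one (T : ℕ) :
    ∑ t ∈ Icc 1 T, ((t : ℝ) - 1) = T * (T - 1) / 2 := by
  rw [sum_sub_distrib, sum_Icc_natCast, sum_const, Nat.card_Icc, nsmul_one]
  push_cast
  ring

theorem sum_Icc_sum_Icc_sub_one (f : ℕ → ℝ) (T : ℕ) :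
    ∑ t' ∈ Icc 1 T, ∑ t ∈ Icc 1 (t' - 1), f t = ∑ t ∈ Icc 1 T, ((T : ℝ) - t) * f t := by
  induction T with
  | zero => simp
  | succ n ih =>
    rw [sum_Icc_succ_top (by omega), sum_Icc_succ_top (by omega), ih, Nat.add_sub_cancel,
      ← sum_add_distrib]
    push_cast
    simp only [sub_self, zero_mul, add_zero]
    exact sum_congr rfl fun t _ => by ring

theorem LinearMap.apply_smul_sum_smul_sum {R M N ι κ : Type*} [CommSemiring R]
    [AddCommMonoid M] [Module R M] [AddCommMonoid N] [Module R N]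
    (u : M →ₗ[R] N →ₗ[R] R) (c d : R) (s : Finset ι) (t : Finset κ) (x : ι → M) (y : κ → N) :
    u (c • ∑ i ∈ s, x i) (d • ∑ j ∈ t, y j) = c * d * ∑ i ∈ s, ∑ j ∈ t, u (x i) (y j) := by
  simp only [map_smul, map_sum, LinearMap.smul_apply, LinearMap.sum_apply, smul_eq_mul,
    mul_sum]
  rw [sum_comm]
  exact sum_congr rfl fun i _ => sum_congr rfl fun j _ => by ring

theorem sum_sub_mul_le_sum_of_average_le {M ι : Type*} [AddCommMonoid M] [Module ℝ M]
    (f g : M →ₗ[ℝ] ℝ) {n δ : ℝ} (hn : 0 < n) (s : Finset ι) (y : ι → M)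
    (h : f ((1 / n) • ∑ i ∈ s, y i) - δ ≤ g ((1 / n) • ∑ i ∈ s, y i)) :
    ∑ i ∈ s, f (y i) - n * δ ≤ ∑ i ∈ s, g (y i) := by
  simp only [map_smul, map_sum, smul_eq_mul] at h
  have := mul_le_mul_of_nonneg_left h hn.le
  rwa [mul_sub, ← mul_assoc, ← mul_assoc, mul_one_div_cancel hn.ne', one_mul, one_mul] at this

theorem fictitious_play_regret_sum_le (T : ℕ) (δ : ℝ) (v : ℕ → ℝ) (w : ℕ → ℕ → ℝ)
    (hv : ∀ t, v t ≤ 1) (hw : ∀ t' t, 0 ≤ w t' t)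
    (hbr : ∀ t', 2 ≤ t' → t' ≤ T →
      ∑ t ∈ Icc 1 (t' - 1), v t - ((t' : ℝ) - 1) * δ ≤ ∑ t ∈ Icc 1 (t' - 1), w t' t) :
    T * ∑ t ∈ Icc 1 T, v t - ∑ t' ∈ Icc 1 T, ∑ t ∈ Icc 1 T, w t' t ≤
      T * (T + 1) / 2 + T * (T - 1) / 2 * δ := by
  have per_round : ∀ t' ∈ Icc 1 T,
      ∑ t ∈ Icc 1 (t' - 1), v t - ((t' : ℝ) - 1) * δ ≤ ∑ t ∈ Icc 1 T, w t' t := by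
    intro t' ht'
    obtain ⟨h1, hT⟩ := mem_Icc.mp ht'
    rcases h1.eq_or_lt with rfl | h2
    · simpa using sum_nonneg fun t _ => hw 1 t
    · exact (hbr t' h2 hT).trans <|
        sum_le_sum_of_subset_of_nonneg (Icc_subset_Icc_right (by omega)) fun t _ _ => hw t' t
  have summed := sum_le_sum per_round
  rw [sum_sub_distrib, sum_Icc_sum_Icc_sub_one, ← sum_mul, sum_Icc_natCast_sub_one] at summed
  have weighted : ∑ t ∈ Icc 1 T, (t : ℝ) * v t ≤ T * (T + 1) / 2 := by
    rw [← sum_Icc_natCast]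
    exact sum_le_sum fun t _ => mul_le_of_le_one_right t.cast_nonneg (hv t)
  have split : T * ∑ t ∈ Icc 1 T, v t - ∑ t ∈ Icc 1 T, ((T : ℝ) - t) * v t =
      ∑ t ∈ Icc 1 T, (t : ℝ) * v t := by
    rw [mul_sum, ← sum_sub_distrib]
    exact sum_congr rfl fun t _ => by ring
  linarith

theorem weakened_fictitious_play_general
    (a b : ℕ) (u : (Fin a → ℝ) →ₗ[ℝ] (Fin b → ℝ) →ₗ[ℝ] ℝ)
    (hu01 : ∀ x y, IsLottery x → IsLottery y → u x y ∈ Set.Icc (0 : ℝ) 1)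
    (T : ℕ) (hT : 0 < T)
    (x1 : ℕ → Fin a → ℝ) (x2 : ℕ → Fin b → ℝ)
    (hx1 : ∀ t, IsLottery (x1 t)) (hx2 : ∀ t, IsLottery (x2 t))
    (δ : ℝ)
    (hbr : ∀ t', 2 ≤ t' → t' ≤ T → ∀ z : Fin a → ℝ, IsLottery z →
      u z ((1 / ((t' : ℝ) - 1)) • ∑ t ∈ Finset.Icc 1 (t' - 1), x2 t) - δ ≤
        u (x1 t') ((1 / ((t' : ℝ) - 1)) • ∑ t ∈ Finset.Icc 1 (t' - 1), x2 t)) :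
    ∀ z : Fin a → ℝ, IsLottery z →
      u z ((1 / (T : ℝ)) • ∑ t ∈ Finset.Icc 1 T, x2 t) -
        u ((1 / (T : ℝ)) • ∑ t ∈ Finset.Icc 1 T, x1 t)
          ((1 / (T : ℝ)) • ∑ t ∈ Finset.Icc 1 T, x2 t) ≤
      ((T : ℝ) + 1) / (2 * T) + (((T : ℝ) - 1) / (2 * T)) * δ := by
  intro z hz
  have hT' : (0 : ℝ) < T := by exact_mod_cast hT
  have hbr_sum : ∀ t', 2 ≤ t' → t' ≤ T →
      ∑ t ∈ Icc 1 (t' - 1), u z (x2 t) - ((t' : ℝ) - 1) * δ ≤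
        ∑ t ∈ Icc 1 (t' - 1), u (x1 t') (x2 t) := by
    intro t' h2 hle
    have ht' : (2 : ℝ) ≤ t' := by exact_mod_cast h2
    exact sum_sub_mul_le_sum_of_average_le (u z) (u (x1 t')) (by linarith) _ x2
      (hbr t' h2 hle z hz)
  have key := fictitious_play_regret_sum_le T δ (fun t => u z (x2 t))
    (fun t' t => u (x1 t') (x2 t)) (fun t => (hu01 _ _ hz (hx2 t)).2)
    (fun t' t => (hu01 _ _ (hx1 t') (hx2 t)).1) hbr_sum
  rw [u.apply_smul_sum_smul_sum, map_smul, map_sum, smul_eq_mul]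
  calc _ = (T * ∑ t ∈ Icc 1 T, u z (x2 t) - ∑ t' ∈ Icc 1 T, ∑ t ∈ Icc 1 T, u (x1 t') (x2 t))
        / T ^ 2 := by field_simp
    _ ≤ (T * (T + 1) / 2 + T * (T - 1) / 2 * δ) / T ^ 2 := by gcongr
    _ = _ := by field_simp

/-- Weakened fictitious play approximation guarantee
(Corollary extending Conitzer 2009, Theorem 1). -/
theorem weakened_fictitious_play
    (a b : ℕ) (u : (Fin a → ℝ) →ₗ[ℝ] (Fin b → ℝ) →ₗ[ℝ] ℝ)
    (hu01 : ∀ x y, IsLottery x → IsLottery y → u x y ∈ Set.Icc (0 : ℝ) 1)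
    (T : ℕ) (hT : 0 < T)
    (x1 : ℕ → Fin a → ℝ) (x2 : ℕ → Fin b → ℝ)
    (hx1 : ∀ t, IsLottery (x1 t)) (hx2 : ∀ t, IsLottery (x2 t))
    (δ : ℝ) (hδ : 0 ≤ δ)
    (hbr : ∀ t', 2 ≤ t' → t' ≤ T → ∀ z : Fin a → ℝ, IsLottery z →
      u z ((1 / ((t' : ℝ) - 1)) • ∑ t ∈ Finset.Icc 1 (t' - 1), x2 t) - δ ≤
        u (x1 t') ((1 / ((t' : ℝ) - 1)) • ∑ t ∈ Finset.Icc 1 (t' - 1), x2 t)) :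
    ∀ z : Fin a → ℝ, IsLottery z →
      u z ((1 / (T : ℝ)) • ∑ t ∈ Finset.Icc 1 T, x2 t) -
        u ((1 / (T : ℝ)) • ∑ t ∈ Finset.Icc 1 T, x1 t)
          ((1 / (T : ℝ)) • ∑ t ∈ Finset.Icc 1 T, x2 t) ≤
      ((T : ℝ) + 1) / (2 * T) + (((T : ℝ) - 1) / (2 * T)) * δ :=
  weakened_fictitious_play_general a b u hu01 T hT x1 x2 hx1 hx2 δ hbr
end

section
/- Let u_1: Δ(A_1) × Δ(A_2) → [0,1] be bilinear, and suppose for each t' in {2,…,T}, u_1(x¹_{t'}, x̄²_{t'−1}) ≥ max_z u_1(z, x̄²_{t'−1}) − δ where x̄²_{t'−1} is the average of x²_1,…,x²_{t'−1}. Then for any fixed strategy b, u_1(x¹_{t'}, x̄²_T) ≥ (1/T) sum_{t=1}^{t'−1} (u_1(b, x²_t) − δ), where x̄²_T = (1/T) sum_{t=1}^T x²_t. -/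
open Finset

/-! Best-responding to the average of `n` plays is, up to `n δ`, best-responding to their sum, and
nonnegativity of the payoffs lets the sum over the first `t' - 1` rounds be extended to all `T`
rounds. -/

theorem map_sum_le_map_sum_of_subset {ι M N F : Type*} [AddCommMonoid M] [AddCommMonoid N]
    [PartialOrder N] [IsOrderedAddMonoid N] [FunLike F M N] [AddMonoidHomClass F M N]
    (f : F) (v : ι → M) {s t : Finset ι} (hst : s ⊆ t) (hv : ∀ i ∈ t, 0 ≤ f (v i)) :
    f (∑ i ∈ s, v i) ≤ f (∑ i ∈ t, v i) := by
  rw [map_sum, map_sum]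
  exact sum_le_sum_of_subset_of_nonneg hst fun i hi _ => hv i hi

theorem LinearMap.sub_mul_le_of_sub_le_inv_smul {𝕜 M : Type*} [Field 𝕜] [LinearOrder 𝕜]
    [IsStrictOrderedRing 𝕜] [AddCommGroup M] [Module 𝕜 M] (f g : M →ₗ[𝕜] 𝕜) {n δ : 𝕜}
    (hn : 0 < n) {s : M} (h : f (n⁻¹ • s) - δ ≤ g (n⁻¹ • s)) :
    f s - n * δ ≤ g s := by
  rw [map_smul, map_smul, smul_eq_mul, smul_eq_mul] at h
  have h' := mul_le_mul_of_nonneg_left h hn.le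
  rwa [mul_sub, ← mul_assoc, ← mul_assoc, mul_inv_cancel₀ hn.ne', one_mul, one_mul] at h'

theorem sum_Icc_one_sub_const {M : Type*} [AddCommGroup M] [Module ℝ M] (f : M →ₗ[ℝ] ℝ)
    (v : ℕ → M) (n : ℕ) (δ : ℝ) :
    ∑ t ∈ Icc 1 n, (f (v t) - δ) = f (∑ t ∈ Icc 1 n, v t) - n * δ := by
  rw [sum_sub_distrib, sum_const, map_sum, Nat.card_Icc, Nat.add_sub_cancel, nsmul_eq_mul]

theorem wfp_intermediate_general
    (a b : ℕ) (u : (Fin a → ℝ) →ₗ[ℝ] (Fin b → ℝ) →ₗ[ℝ] ℝ)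
    (hu0 : ∀ x y, IsLottery x → IsLottery y → 0 ≤ u x y)
    (T : ℕ)
    (x1 : ℕ → Fin a → ℝ) (x2 : ℕ → Fin b → ℝ)
    (hx1 : ∀ t, IsLottery (x1 t)) (hx2 : ∀ t, IsLottery (x2 t))
    (δ : ℝ)
    (hbr : ∀ t', 2 ≤ t' → t' ≤ T → ∀ z : Fin a → ℝ, IsLottery z →
      u z ((1 / ((t' : ℝ) - 1)) • ∑ t ∈ Finset.Icc 1 (t' - 1), x2 t) - δ ≤
        u (x1 t') ((1 / ((t' : ℝ) - 1)) • ∑ t ∈ Finset.Icc 1 (t' - 1), x2 t)) :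
    ∀ t', 2 ≤ t' → t' ≤ T → ∀ bstrat : Fin a → ℝ, IsLottery bstrat →
      (1 / (T : ℝ)) * ∑ t ∈ Finset.Icc 1 (t' - 1), (u bstrat (x2 t) - δ) ≤
        u (x1 t') ((1 / (T : ℝ)) • ∑ t ∈ Finset.Icc 1 T, x2 t) := by
  intro t' h2t' ht'T bstrat hb
  have hn : ((t' - 1 : ℕ) : ℝ) = (t' : ℝ) - 1 := by
    rw [Nat.cast_sub (by omega), Nat.cast_one]
  have hpos : (0 : ℝ) < (t' : ℝ) - 1 := by
    rw [← hn]; exact_mod_cast (by omega : 0 < t' - 1)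
  have hbest := (u bstrat).sub_mul_le_of_sub_le_inv_smul (u (x1 t')) hpos
    (by simpa only [one_div] using hbr t' h2t' ht'T bstrat hb)
  have hextend : u (x1 t') (∑ t ∈ Icc 1 (t' - 1), x2 t) ≤ u (x1 t') (∑ t ∈ Icc 1 T, x2 t) :=
    map_sum_le_map_sum_of_subset (u (x1 t')) x2 (Icc_subset_Icc_right (by omega))
      fun t _ => hu0 _ _ (hx1 t') (hx2 t)
  rw [sum_Icc_one_sub_const, map_smul, smul_eq_mul, hn]
  gcongr
  exact hbest.trans hextend

/-- Key intermediate inequality of the weakened fictitious play bound: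
an approximate best response to the history retains value against the full
average up to truncation. -/
theorem wfp_intermediate
    (a b : ℕ) (u : (Fin a → ℝ) →ₗ[ℝ] (Fin b → ℝ) →ₗ[ℝ] ℝ)
    (hu0 : ∀ x y, IsLottery x → IsLottery y → 0 ≤ u x y)
    (T : ℕ) (hT : 0 < T)
    (x1 : ℕ → Fin a → ℝ) (x2 : ℕ → Fin b → ℝ)
    (hx1 : ∀ t, IsLottery (x1 t)) (hx2 : ∀ t, IsLottery (x2 t))
    (δ : ℝ) (hδ : 0 ≤ δ)
    (hbr : ∀ t', 2 ≤ t' → t' ≤ T → ∀ z : Fin a → ℝ, IsLottery z →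
      u z ((1 / ((t' : ℝ) - 1)) • ∑ t ∈ Finset.Icc 1 (t' - 1), x2 t) - δ ≤
        u (x1 t') ((1 / ((t' : ℝ) - 1)) • ∑ t ∈ Finset.Icc 1 (t' - 1), x2 t)) :
    ∀ t', 2 ≤ t' → t' ≤ T → ∀ bstrat : Fin a → ℝ, IsLottery bstrat →
      (1 / (T : ℝ)) * ∑ t ∈ Finset.Icc 1 (t' - 1), (u bstrat (x2 t) - δ) ≤
        u (x1 t') ((1 / (T : ℝ)) • ∑ t ∈ Finset.Icc 1 T, x2 t) :=
  wfp_intermediate_general a b u hu0 T x1 x2 hx1 hx2 δ hbr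
end
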